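/- Let M be a real symmetric n×n matrix. Then for any two indices i, j, the sum of vertex M-energies satisfies ME(v_i) + ME(v_j) ≥ 2·|[M − (tr(M)/n)I]_{ij}|. -/

import Mathlib

/-!
For a symmetric matrix `B`, the matrices `|B| - B = 2 B⁻` and `|B| + B = 2 B⁺` are positive
semidefinite, i.e. `-|B| ≤ B ≤ |B|` in the Loewner order. Evaluating a positive semidefinite
`P` on `eᵢ ± eⱼ` gives `|Pᵢⱼ + Pⱼᵢ| ≤ Pᵢᵢ + Pⱼⱼ`; applied to `P = |B| ∓ B` and added up, this
yields `2 |Bᵢⱼ| ≤ |B|ᵢᵢ + |B|ⱼⱼ`.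
-/

open Matrix BigOperators

/-- The absolute value of a real matrix `B`, defined as `(B * Bᵀ)^(1/2)`. -/
noncomputable def matAbs {n : ℕ} (B : Matrix (Fin n) (Fin n) ℝ) : Matrix (Fin n) (Fin n) ℝ :=
  let hA : (B * Bᵀ).PosSemidef := Matrix.conjTranspose_eq_transpose_of_trivial B ▸
    Matrix.posSemidef_self_mul_conjTranspose B
  hA.1.eigenvectorUnitary.1 * diagonal ((↑) ∘ (fun x : ℝ => √x) ∘ hA.1.eigenvalues) *
    (star hA.1.eigenvectorUnitary : Matrix (Fin n) (Fin n) ℝ)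

/-- The M-energy of the `i`-th vertex: `(|M - (tr M / n) • I|)_{ii}`. -/
noncomputable def mEnergy {n : ℕ} (M : Matrix (Fin n) (Fin n) ℝ) (i : Fin n) : ℝ :=
  matAbs (M - (M.trace / n) • 1) i i

open scoped MatrixOrder

namespace CFC

variable {A : Type*} [NonUnitalRing A] [StarRing A] [TopologicalSpace A]
  [Module ℝ A] [SMulCommClass ℝ A A] [IsScalarTower ℝ A A]
  [NonUnitalContinuousFunctionalCalculus ℝ A IsSelfAdjoint]
  [PartialOrder A] [StarOrderedRing A] [NonnegSpectrumClass ℝ A]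
  [IsTopologicalRing A] [T2Space A]

theorem le_abs (a : A) (ha : IsSelfAdjoint a := by cfc_tac) : a ≤ abs a :=
  sub_nonneg.mp <| abs_sub_self a ha ▸ nsmul_nonneg (negPart_nonneg a) 2

theorem neg_abs_le (a : A) (ha : IsSelfAdjoint a := by cfc_tac) : -abs a ≤ a :=
  neg_le_iff_add_nonneg'.mpr <| abs_add_self a ha ▸ nsmul_nonneg (posPart_nonneg a) 2

end CFC

namespace Matrix

variable {ι : Type*} [Fintype ι] [DecidableEq ι]

theorem PosSemidef.abs_add_apply_le {A : Matrix ι ι ℝ} (hA : A.PosSemidef) (i j : ι) :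
    |A i j + A j i| ≤ A i i + A j j := by
  have quadratic (s : ℝ) : 0 ≤ A i i + s * (A i j + A j i) + s ^ 2 * A j j := by
    have h := hA.dotProduct_mulVec_nonneg (Pi.single i 1 + s • Pi.single j 1)
    simp only [star_trivial, mulVec_add, mulVec_smul, add_dotProduct, dotProduct_add,
      smul_dotProduct, dotProduct_smul, mulVec_single_one, single_dotProduct, col_apply,
      one_mul, smul_eq_mul] at h
    linarith
  rw [abs_le]
  constructor <;> linarith [quadratic 1, quadratic (-1)]

theorem IsSymm.two_mul_abs_apply_le {A B : Matrix ι ι ℝ} (hB : B.IsSymm) (hle : B ≤ A)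
    (hge : -A ≤ B) (i j : ι) : 2 * |B i j| ≤ A i i + A j j := by
  have hsub := (le_iff.mp hle).abs_add_apply_le i j
  have hadd := (le_iff.mp hge).abs_add_apply_le i j
  simp only [sub_apply, neg_apply, sub_neg_eq_add, hB.apply i j] at hsub hadd
  rw [abs_le] at hsub hadd
  rcases abs_cases (B i j) with ⟨h, -⟩ | ⟨h, -⟩ <;> linarith

end Matrix

theorem matAbs_eq_cfcAbs_transpose {n : ℕ} (B : Matrix (Fin n) (Fin n) ℝ) :
    matAbs B = CFC.abs Bᵀ := by
  have hpsd : (B * Bᵀ).PosSemidef :=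
    conjTranspose_eq_transpose_of_trivial B ▸ posSemidef_self_mul_conjTranspose B
  rw [CFC.abs, star_eq_conjTranspose, conjTranspose_eq_transpose_of_trivial, transpose_transpose,
    CFC.sqrt_eq_real_sqrt _ hpsd.nonneg, cfcₙ_eq_cfc, hpsd.1.cfc_eq]
  rfl

theorem stmt4 {n : ℕ} (M : Matrix (Fin n) (Fin n) ℝ) (hM : M.IsSymm) (i j : Fin n) :
    mEnergy M i + mEnergy M j ≥ 2 * |(M - (M.trace / n) • 1) i j| := by
  set B := M - (M.trace / n) • 1
  have hB : B.IsSymm := hM.sub (isSymm_one.smul _)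
  have hAbs : matAbs B = CFC.abs B := by rw [matAbs_eq_cfcAbs_transpose, hB.eq]
  rw [mEnergy, mEnergy, hAbs]
  exact hB.two_mul_abs_apply_le (CFC.le_abs B hB) (CFC.neg_abs_le B hB) i j
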